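/- Assume hypotheses (EC) and (UC). (i) For every τ ∈ [0,T) and 0 ≤ M < M^τ, every optimal control to (OP)^{M,τ} is an optimal control to (NP)^{τ,r(M,τ)}. (ii) For every τ ∈ [0,T) and r ∈ (0,r_T], every optimal control to (NP)^{τ,r} is an optimal control to (OP)^{M(τ,r),τ}. (iii) For every τ ∈ [0,T) and r ∈ (0,r_T], (NP)^{τ,r} has the bang-bang property (every optimal control u* satisfies ‖u*(t)‖ = M(τ,r) for a.e. t ∈ (τ,T)) and its optimal control is unique (any two optimal controls coincide a.e. on (τ,T)). -/

import Mathlib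

/-!
The states reachable with controls in `U_{M,τ}` form a convex set, so an optimal control of
`(OP)^{M,τ}` steers to the projection of `z_d` onto it. The resulting variational inequality,
tested against `v = M • Bφ* / ‖Bφ*‖` with `φ*` the adjoint state, gives `re ⟪Bφ*, u⟫ = M ‖Bφ*‖`
a.e.; since `Bφ* ≠ 0` a.e. by unique continuation, `‖u‖ = M` a.e. whenever `z_d` is not reached.

For (i), `M < M^τ` means `z_d` is not reached, so every optimal control of `(OP)^{M,τ}` has norm
exactly `M`; a control of smaller norm in `W_{τ,r(M,τ)}` would itself be optimal, which is
impossible. For (ii), a control of `U_{M(τ,r),τ}` ending strictly closer to `z_d` could be scaled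
by some `c < 1` and stay in `W_{τ,r}`, contradicting the minimality of `M(τ,r)`. The bang-bang
property of `(NP)^{τ,r}` then follows from (ii), and uniqueness from applying it to the midpoint
of two optimal controls, using the strict convexity of the norm.
-/

open MeasureTheory Set Filter Topology

noncomputable section

variable {H : Type*} [NormedAddCommGroup H] [InnerProductSpace ℂ H] [CompleteSpace H]
  [SecondCountableTopology H]

/-- `U` is a strongly continuous one-parameter group of unitary operators on `H`,
abstracting the Schrödinger group `e^{-iΔt}`. -/
def IsUnitaryGroup (U : ℝ → H →L[ℂ] H) : Prop :=
  U 0 = ContinuousLinearMap.id ℂ H ∧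
  (∀ s t : ℝ, U (s + t) = (U s).comp (U t)) ∧
  (∀ (t : ℝ) (x : H), ‖U t x‖ = ‖x‖) ∧
  ∀ x : H, Continuous fun t : ℝ => U t x

/-- `B` is a nonzero orthogonal projection on `H`, abstracting multiplication by `χ_ω`. -/
def IsOrthProj (B : H →L[ℂ] H) : Prop :=
  B ≠ 0 ∧ B.comp B = B ∧ ∀ x y : H, (inner ℂ (B x) y : ℂ) = inner ℂ x (B y)

/-- Membership in `L∞((a,b);H)`. -/
def MemLinfty (u : ℝ → H) (a b : ℝ) : Prop :=
  AEStronglyMeasurable u (volume : Measure ℝ) ∧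
    ∃ c : ℝ, ∀ᵐ t : ℝ ∂volume, t ∈ Ioo a b → ‖u t‖ ≤ c

/-- Membership in `L∞((0,∞);H)`. -/
def MemLinftyInf (u : ℝ → H) : Prop :=
  AEStronglyMeasurable u (volume : Measure ℝ) ∧
    ∃ c : ℝ, ∀ᵐ t : ℝ ∂volume, t ∈ Ioi (0 : ℝ) → ‖u t‖ ≤ c

/-- The `L∞((a,b);H)` norm of `u`. -/
def supNorm (u : ℝ → H) (a b : ℝ) : ℝ :=
  sInf {c : ℝ | 0 ≤ c ∧ ∀ᵐ t : ℝ ∂volume, t ∈ Ioo a b → ‖u t‖ ≤ c}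

/-- `stateT U B T τ u y₀ = y(T; χ_{(τ,T)}u, y₀)`, the mild solution at time `T` of the
controlled Schrödinger equation with initial state `y₀`, the control acting on `(τ,T)`:
`y(T) = U(T)y₀ + ∫_τ^T U(T-s) B u(s) ds`.  The free state at time `t` starting from `y₀`
with control `u` active from time `0` is `stateT U B t 0 u y₀`. -/
def stateT (U : ℝ → H →L[ℂ] H) (B : H →L[ℂ] H) (T τ : ℝ) (u : ℝ → H) (y₀ : H) : H :=
  U T y₀ + ∫ s in Ioo τ T, U (T - s) (B (u s))

/-- Hypothesis (EC): `L∞`-exact controllability with cost. -/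
def EC (U : ℝ → H →L[ℂ] H) (B : H →L[ℂ] H) : Prop :=
  ∀ τ : ℝ, 0 < τ → ∃ C : ℝ, 0 < C ∧ ∀ y₀ z : H, ∃ u : ℝ → H,
    AEStronglyMeasurable u (volume : Measure ℝ) ∧
    (∀ᵐ t : ℝ ∂volume, t ∈ Ioo 0 τ → ‖u t‖ ≤ C * ‖z - U τ y₀‖) ∧
    stateT U B τ 0 u y₀ = z

/-- Hypothesis (UC): unique continuation. -/
def UC (U : ℝ → H →L[ℂ] H) (B : H →L[ℂ] H) : Prop :=
  ∀ η : H, η ≠ 0 → volume {t : ℝ | B (U t η) = 0} = 0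

/-- The admissible set `U_M` of the minimal time problem `(TOCP)_M`. -/
def UMset (U : ℝ → H →L[ℂ] H) (B : H →L[ℂ] H) (y₀ : H) (M : ℝ) : Set (ℝ → H) :=
  {u | MemLinftyInf u ∧ (∀ᵐ t : ℝ ∂volume, t ∈ Ioi (0 : ℝ) → ‖u t‖ ≤ M) ∧
    ∃ s : ℝ, 0 < s ∧ stateT U B s 0 u y₀ = 0}

/-- The minimal time `T_M` of `(TOCP)_M`. -/
def Tmin (U : ℝ → H →L[ℂ] H) (B : H →L[ℂ] H) (y₀ : H) (M : ℝ) : ℝ :=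
  sInf {s : ℝ | 0 < s ∧ ∃ u ∈ UMset U B y₀ M, stateT U B s 0 u y₀ = 0}

/-- The admissible set `V_T` of the minimal norm problem `(NOCP)_T`. -/
def VTset (U : ℝ → H →L[ℂ] H) (B : H →L[ℂ] H) (y₀ : H) (T : ℝ) : Set (ℝ → H) :=
  {v | MemLinfty v 0 T ∧ stateT U B T 0 v y₀ = 0}

/-- The minimal norm `M_T` of `(NOCP)_T`. -/
def Mmin (U : ℝ → H →L[ℂ] H) (B : H →L[ℂ] H) (y₀ : H) (T : ℝ) : ℝ :=
  sInf ((fun v : ℝ → H => supNorm v 0 T) '' VTset U B y₀ T)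

/-- Hypothesis (BB): bang-bang property of the minimal time problems. -/
def BB (U : ℝ → H →L[ℂ] H) (B : H →L[ℂ] H) : Prop :=
  ∀ y₀ : H, y₀ ≠ 0 → ∀ M : ℝ, 0 < M → ∀ u ∈ UMset U B y₀ M,
    stateT U B (Tmin U B y₀ M) 0 u y₀ = 0 →
    ∀ᵐ t : ℝ ∂volume, t ∈ Ioo 0 (Tmin U B y₀ M) → ‖u t‖ = M

/-- Hypothesis (ET): existence of optimal controls for the minimal time problems. -/
def ET (U : ℝ → H →L[ℂ] H) (B : H →L[ℂ] H) : Prop :=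
  ∀ y₀ : H, y₀ ≠ 0 → ∀ M : ℝ, 0 < M →
    ∃ u ∈ UMset U B y₀ M, stateT U B (Tmin U B y₀ M) 0 u y₀ = 0

/-- The admissible set `U_{M,τ}`. -/
def UadmSet (M τ T : ℝ) : Set (ℝ → H) :=
  {u | MemLinfty u 0 T ∧ ∀ᵐ t : ℝ ∂volume, t ∈ Ioo τ T → ‖u t‖ ≤ M}

/-- The optimal distance `r(M,τ)` of the optimal target problem `(OP)^{M,τ}`. -/
def rOP (U : ℝ → H →L[ℂ] H) (B : H →L[ℂ] H) (y₀ z_d : H) (T M τ : ℝ) : ℝ :=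
  sInf ((fun u : ℝ → H => ‖stateT U B T τ u y₀ - z_d‖) '' UadmSet M τ T)

/-- `u` is an optimal control to `(OP)^{M,τ}`. -/
def IsOptOP (U : ℝ → H →L[ℂ] H) (B : H →L[ℂ] H) (y₀ z_d : H) (T M τ : ℝ) (u : ℝ → H) :
    Prop :=
  u ∈ UadmSet M τ T ∧ ‖stateT U B T τ u y₀ - z_d‖ = rOP U B y₀ z_d T M τ

/-- `M^τ`, the minimal norm for exact steering to the target `z_d`. -/
def Mtau (U : ℝ → H →L[ℂ] H) (B : H →L[ℂ] H) (y₀ z_d : H) (T τ : ℝ) : ℝ :=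
  sInf ((fun u : ℝ → H => supNorm u τ T) ''
    {u : ℝ → H | MemLinfty u 0 T ∧ stateT U B T τ u y₀ = z_d})

/-- The admissible set `W_{τ,r}` of the optimal norm problem `(NP)^{τ,r}`. -/
def WadmSet (U : ℝ → H →L[ℂ] H) (B : H →L[ℂ] H) (y₀ z_d : H) (T τ r : ℝ) :
    Set (ℝ → H) :=
  {u | MemLinfty u 0 T ∧ ‖stateT U B T τ u y₀ - z_d‖ ≤ r}

/-- The optimal norm `M(τ,r)` of `(NP)^{τ,r}`. -/
def MNP (U : ℝ → H →L[ℂ] H) (B : H →L[ℂ] H) (y₀ z_d : H) (T τ r : ℝ) : ℝ :=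
  sInf ((fun u : ℝ → H => supNorm u τ T) '' WadmSet U B y₀ z_d T τ r)

/-- `u` is an optimal control to `(NP)^{τ,r}`. -/
def IsOptNP (U : ℝ → H →L[ℂ] H) (B : H →L[ℂ] H) (y₀ z_d : H) (T τ r : ℝ) (u : ℝ → H) :
    Prop :=
  u ∈ WadmSet U B y₀ z_d T τ r ∧ supNorm u τ T = MNP U B y₀ z_d T τ r

/-- The admissible set `V_{M,r}` of the second type optimal time problem `(TP)^{M,r}`. -/
def VadmSet (U : ℝ → H →L[ℂ] H) (B : H →L[ℂ] H) (y₀ z_d : H) (T M r : ℝ) :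
    Set (ℝ → H) :=
  {u | ∃ τ : ℝ, τ ∈ Ico (0 : ℝ) T ∧ u ∈ UadmSet M τ T ∧
    ‖stateT U B T τ u y₀ - z_d‖ ≤ r}

/-- `τ_{M,r}(u)`. -/
def tauOf (U : ℝ → H →L[ℂ] H) (B : H →L[ℂ] H) (y₀ z_d : H) (T r : ℝ) (u : ℝ → H) : ℝ :=
  sSup {τ : ℝ | τ ∈ Ico (0 : ℝ) T ∧ ‖stateT U B T τ u y₀ - z_d‖ ≤ r}

/-- The optimal time `τ(M,r)` of `(TP)^{M,r}`. -/
def tauTP (U : ℝ → H →L[ℂ] H) (B : H →L[ℂ] H) (y₀ z_d : H) (T M r : ℝ) : ℝ :=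
  sSup (tauOf U B y₀ z_d T r '' VadmSet U B y₀ z_d T M r)

/-- `u` is an optimal control to `(TP)^{M,r}`. -/
def IsOptTP (U : ℝ → H →L[ℂ] H) (B : H →L[ℂ] H) (y₀ z_d : H) (T M r : ℝ) (u : ℝ → H) :
    Prop :=
  u ∈ VadmSet U B y₀ z_d T M r ∧
    ‖stateT U B T (tauTP U B y₀ z_d T M r) u y₀ - z_d‖ ≤ r

/-- The adjoint state `φ*(t) = U(t-T)(z_d - y(T; χ_{(τ,T)}u, y₀))`. -/
def adjState (U : ℝ → H →L[ℂ] H) (B : H →L[ℂ] H) (y₀ z_d : H) (T τ : ℝ) (u : ℝ → H)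
    (t : ℝ) : H :=
  U (t - T) (z_d - stateT U B T τ u y₀)

open scoped InnerProductSpace

theorem norm_div_norm_smul_le {F : Type*} [NormedAddCommGroup F] [NormedSpace ℝ F] {M : ℝ}
    (hM : 0 ≤ M) (x : F) : ‖(M / ‖x‖) • x‖ ≤ M := by
  rcases eq_or_ne x 0 with rfl | hx
  · simpa using hM
  · rw [norm_smul, Real.norm_eq_abs, abs_div, abs_norm, abs_of_nonneg hM,
      div_mul_cancel₀ _ (norm_ne_zero_iff.2 hx)]

theorem re_inner_div_norm_smul {E : Type*} [NormedAddCommGroup E] [InnerProductSpace ℂ E]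
    (M : ℝ) (x : E) : RCLike.re ⟪x, (M / ‖x‖) • x⟫_ℂ = M * ‖x‖ := by
  rw [RCLike.real_smul_eq_coe_smul (K := ℂ), inner_smul_right, RCLike.re_ofReal_mul,
    inner_self_eq_norm_sq]
  rcases eq_or_ne ‖x‖ 0 with h | h
  · simp [h]
  · field_simp

section Operators

variable {E : Type*} [NormedAddCommGroup E] [InnerProductSpace ℂ E]
  {U : ℝ → E →L[ℂ] E} {B : E →L[ℂ] E}

namespace IsUnitaryGroup

theorem norm_map (hU : IsUnitaryGroup U) (t : ℝ) (x : E) : ‖U t x‖ = ‖x‖ := hU.2.2.1 t x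

theorem continuous_apply (hU : IsUnitaryGroup U) (x : E) : Continuous fun t => U t x :=
  hU.2.2.2 x

theorem map_neg_apply (hU : IsUnitaryGroup U) (t : ℝ) (x : E) : U t (U (-t) x) = x := by
  rw [← ContinuousLinearMap.comp_apply, ← hU.2.1, add_neg_cancel, hU.1]
  rfl

theorem inner_map_right (hU : IsUnitaryGroup U) (t : ℝ) (x y : E) :
    ⟪x, U t y⟫_ℂ = ⟪U (-t) x, y⟫_ℂ := by
  let V : E →ₗᵢ[ℂ] E := ⟨(U t : E →ₗ[ℂ] E), hU.norm_map t⟩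
  conv_lhs => rw [← hU.map_neg_apply t x]
  exact V.inner_map_map _ y

theorem continuous_uncurry (hU : IsUnitaryGroup U) :
    Continuous fun p : ℝ × E => U p.1 p.2 := by
  refine continuous_iff_continuousAt.2 fun p => ?_
  rw [ContinuousAt, tendsto_iff_norm_sub_tendsto_zero]
  have hbound (q : ℝ × E) :
      ‖U q.1 q.2 - U p.1 p.2‖ ≤ ‖q.2 - p.2‖ + ‖U q.1 p.2 - U p.1 p.2‖ := by
    calc ‖U q.1 q.2 - U p.1 p.2‖ = ‖U q.1 (q.2 - p.2) + (U q.1 p.2 - U p.1 p.2)‖ := by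
          rw [map_sub, sub_add_sub_cancel]
      _ ≤ ‖q.2 - p.2‖ + ‖U q.1 p.2 - U p.1 p.2‖ := by
          rw [← hU.norm_map q.1 (q.2 - p.2)]; exact norm_add_le _ _
  have hcont : Continuous fun q : ℝ × E => ‖q.2 - p.2‖ + ‖U q.1 p.2 - U p.1 p.2‖ :=
    (continuous_snd.sub continuous_const).norm.add
      (((hU.continuous_apply p.2).comp continuous_fst).sub continuous_const).norm
  exact squeeze_zero (fun _ => norm_nonneg _) hbound (by simpa using hcont.tendsto p)

end IsUnitaryGroup

theorem UC.ae_ne_zero (hUC : UC U B) {η : E} (hη : η ≠ 0) (T : ℝ) :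
    ∀ᵐ s : ℝ, B (U (s - T) η) ≠ 0 := by
  have hpre : {s : ℝ | B (U (s - T) η) = 0} = (· + -T) ⁻¹' {t : ℝ | B (U t η) = 0} := by
    ext s; simp [sub_eq_add_neg]
  rw [ae_iff]
  simp only [ne_eq, not_not]
  rw [hpre, measure_preimage_add_right]
  exact hUC η hη

theorem IsOrthProj.isSymmetric (hB : IsOrthProj B) : (B : E →ₗ[ℂ] E).IsSymmetric :=
  hB.2.2

end Operators

section Linfty

variable {E : Type*} [NormedAddCommGroup E] {u v : ℝ → E} {a b c M : ℝ}

theorem MemLinfty.mono (h : MemLinfty u a b) {a' b' : ℝ} (ha : a ≤ a') (hb : b' ≤ b) :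
    MemLinfty u a' b' :=
  ⟨h.1, h.2.imp fun _ hc => hc.mono fun _ ht ht' => ht (Ioo_subset_Ioo ha hb ht')⟩

theorem MemLinfty.add (hu : MemLinfty u a b) (hv : MemLinfty v a b) : MemLinfty (u + v) a b := by
  obtain ⟨cu, hcu⟩ := hu.2
  obtain ⟨cv, hcv⟩ := hv.2
  refine ⟨hu.1.add hv.1, cu + cv, ?_⟩
  filter_upwards [hcu, hcv] with t hu hv ht
  exact norm_add_le_of_le (hu ht) (hv ht)

theorem MemLinfty.const_smul [NormedSpace ℝ E] (hu : MemLinfty u a b) (c : ℝ) :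
    MemLinfty (c • u) a b := by
  obtain ⟨cu, hcu⟩ := hu.2
  refine ⟨hu.1.const_smul c, ‖c‖ * cu, hcu.mono fun t ht ht' => ?_⟩
  rw [Pi.smul_apply, norm_smul]
  exact mul_le_mul_of_nonneg_left (ht ht') (norm_nonneg c)

theorem supNorm_nonneg (u : ℝ → E) (a b : ℝ) : 0 ≤ supNorm u a b :=
  Real.sInf_nonneg fun _ hx => hx.1

theorem supNorm_le (hc : 0 ≤ c) (h : ∀ᵐ t : ℝ, t ∈ Ioo a b → ‖u t‖ ≤ c) : supNorm u a b ≤ c :=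
  csInf_le ⟨0, fun _ hx => hx.1⟩ ⟨hc, h⟩

theorem ae_norm_le_supNorm (h : ∃ c : ℝ, ∀ᵐ t : ℝ, t ∈ Ioo a b → ‖u t‖ ≤ c) :
    ∀ᵐ t : ℝ, t ∈ Ioo a b → ‖u t‖ ≤ supNorm u a b := by
  obtain ⟨c, hc⟩ := h
  have hne : {c : ℝ | 0 ≤ c ∧ ∀ᵐ t : ℝ, t ∈ Ioo a b → ‖u t‖ ≤ c}.Nonempty :=
    ⟨max c 0, le_max_right _ _, hc.mono fun t ht ht' => (ht ht').trans (le_max_left _ _)⟩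
  obtain ⟨f, -, hf_lim, hf_mem⟩ := exists_seq_tendsto_sInf hne ⟨0, fun _ hx => hx.1⟩
  filter_upwards [ae_all_iff.2 fun n => (hf_mem n).2] with t ht ht'
  exact ge_of_tendsto hf_lim (Eventually.of_forall fun n => ht n ht')

theorem supNorm_eq_of_ae_norm_eq (hab : a < b) (h : ∀ᵐ t : ℝ, t ∈ Ioo a b → ‖u t‖ = M) :
    supNorm u a b = M := by
  have hle : ∀ᵐ t : ℝ, t ∈ Ioo a b → ‖u t‖ ≤ M := h.mono fun _ ht ht' => (ht ht').le
  have : (ae (volume.restrict (Ioo a b))).NeBot := ae_restrict_neBot.2 (by simp [hab])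
  obtain ⟨t, htM, ht⟩ := (((ae_restrict_iff' measurableSet_Ioo).2 h).and
    ((ae_restrict_iff' measurableSet_Ioo).2 (ae_norm_le_supNorm ⟨M, hle⟩))).exists
  have hM : 0 ≤ M := htM ▸ norm_nonneg _
  exact le_antisymm (supNorm_le hM hle) (htM ▸ ht)

end Linfty

section Control

variable {E : Type*} [NormedAddCommGroup E] [InnerProductSpace ℂ E]
  {U : ℝ → E →L[ℂ] E} {B : E →L[ℂ] E} {u v : ℝ → E} {y₀ z_d : E} {T τ r M : ℝ}

variable (U B) in
def controlMap (T τ : ℝ) (u : ℝ → E) : E := ∫ s in Ioo τ T, U (T - s) (B (u s))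

theorem stateT_eq_add_controlMap : stateT U B T τ u y₀ = U T y₀ + controlMap U B T τ u := rfl

theorem stateT_eq_of_ae_eq (h : ∀ᵐ t : ℝ, t ∈ Ioo τ T → u t = v t) :
    stateT U B T τ u y₀ = stateT U B T τ v y₀ :=
  congrArg (U T y₀ + ·) <| setIntegral_congr_ae measurableSet_Ioo <|
    h.mono fun t ht ht' => by rw [ht ht']

theorem IsUnitaryGroup.integrableOn_controlMap (hU : IsUnitaryGroup U) (hu : MemLinfty u τ T) :
    IntegrableOn (fun s => U (T - s) (B (u s))) (Ioo τ T) := by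
  obtain ⟨c, hc⟩ := hu.2
  refine Integrable.mono' (integrableOn_const (C := ‖B‖ * c) measure_Ioo_lt_top.ne)
    (hU.continuous_uncurry.comp_aestronglyMeasurable
      ((continuous_const.sub continuous_id).aestronglyMeasurable.prodMk
        (B.continuous.comp_aestronglyMeasurable hu.1))).restrict ?_
  rw [ae_restrict_iff' measurableSet_Ioo]
  filter_upwards [hc] with t ht ht'
  rw [hU.norm_map]
  exact B.le_opNorm_of_le (ht ht')

theorem controlMap_smul (c : ℝ) (u : ℝ → E) :
    controlMap U B T τ (c • u) = c • controlMap U B T τ u := by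
  simp only [controlMap, Pi.smul_apply, ContinuousLinearMap.map_smul_of_tower, integral_smul]

theorem IsUnitaryGroup.controlMap_add (hU : IsUnitaryGroup U) (hu : MemLinfty u τ T)
    (hv : MemLinfty v τ T) :
    controlMap U B T τ (u + v) = controlMap U B T τ u + controlMap U B T τ v := by
  simp only [controlMap, Pi.add_apply, map_add]
  exact integral_add (hU.integrableOn_controlMap hu) (hU.integrableOn_controlMap hv)

theorem IsUnitaryGroup.stateT_smul_add_smul (hU : IsUnitaryGroup U) (hu : MemLinfty u τ T)
    (hv : MemLinfty v τ T) {a b : ℝ} (hab : a + b = 1) :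
    stateT U B T τ (a • u + b • v) y₀ = a • stateT U B T τ u y₀ + b • stateT U B T τ v y₀ := by
  simp only [stateT_eq_add_controlMap, hU.controlMap_add (hu.const_smul a) (hv.const_smul b),
    controlMap_smul]
  linear_combination (norm := module) -(hab • U T y₀)

theorem IsUnitaryGroup.inner_controlMap_integrand (hU : IsUnitaryGroup U)
    (hB : (B : E →ₗ[ℂ] E).IsSymmetric) (η x : E) (s : ℝ) :
    ⟪η, U (T - s) (B x)⟫_ℂ = ⟪B (U (s - T) η), x⟫_ℂ := by
  rw [hU.inner_map_right, neg_sub]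
  exact (hB _ _).symm

theorem IsUnitaryGroup.integrableOn_re_inner_adjoint (hU : IsUnitaryGroup U)
    (hB : (B : E →ₗ[ℂ] E).IsSymmetric) (η : E) (hu : MemLinfty u τ T) :
    IntegrableOn (fun s => RCLike.re ⟪B (U (s - T) η), u s⟫_ℂ) (Ioo τ T) := by
  simpa only [IntegrableOn, hU.inner_controlMap_integrand hB] using
    ((hU.integrableOn_controlMap (B := B) hu).const_inner (𝕜 := ℂ) η).re

theorem IsUnitaryGroup.re_inner_controlMap [CompleteSpace E] (hU : IsUnitaryGroup U)
    (hB : (B : E →ₗ[ℂ] E).IsSymmetric) (η : E) (hu : MemLinfty u τ T) :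
    RCLike.re ⟪η, controlMap U B T τ u⟫_ℂ =
      ∫ s in Ioo τ T, RCLike.re ⟪B (U (s - T) η), u s⟫_ℂ := by
  have hI := hU.integrableOn_controlMap (B := B) hu
  rw [controlMap, ← integral_inner hI, ← integral_re (hI.const_inner η)]
  simp only [hU.inner_controlMap_integrand hB]

theorem convex_UadmSet : Convex ℝ (UadmSet M τ T : Set (ℝ → E)) := by
  intro u hu v hv a b ha hb hab
  refine ⟨(hu.1.const_smul a).add (hv.1.const_smul b), ?_⟩
  filter_upwards [hu.2, hv.2] with t hut hvt ht
  simpa using convex_closedBall (0 : E) M (by simpa using hut ht) (by simpa using hvt ht) ha hb hab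

variable (U B) in
def reachableSet (y₀ : E) (T τ M : ℝ) : Set E := (stateT U B T τ · y₀) '' UadmSet M τ T

theorem IsUnitaryGroup.convex_reachableSet (hU : IsUnitaryGroup U) (hτ : 0 ≤ τ) :
    Convex ℝ (reachableSet U B y₀ T τ M) := by
  rintro _ ⟨u, hu, rfl⟩ _ ⟨v, hv, rfl⟩ a b ha hb hab
  exact ⟨a • u + b • v, convex_UadmSet hu hv ha hb hab,
    hU.stateT_smul_add_smul (hu.1.mono hτ le_rfl) (hv.1.mono hτ le_rfl) hab⟩

theorem IsUnitaryGroup.convex_WadmSet (hU : IsUnitaryGroup U) (hτ : 0 ≤ τ) :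
    Convex ℝ (WadmSet U B y₀ z_d T τ r) := by
  intro u hu v hv a b ha hb hab
  refine ⟨(hu.1.const_smul a).add (hv.1.const_smul b), ?_⟩
  rw [hU.stateT_smul_add_smul (hu.1.mono hτ le_rfl) (hv.1.mono hτ le_rfl) hab, ← dist_eq_norm]
  exact convex_closedBall z_d r (by simpa [dist_eq_norm] using hu.2)
    (by simpa [dist_eq_norm] using hv.2) ha hb hab

theorem rOP_le (hu : u ∈ UadmSet M τ T) :
    rOP U B y₀ z_d T M τ ≤ ‖stateT U B T τ u y₀ - z_d‖ :=
  csInf_le ⟨0, by rintro _ ⟨v, -, rfl⟩; exact norm_nonneg _⟩ ⟨u, hu, rfl⟩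

theorem rOP_eq_iInf_reachableSet :
    rOP U B y₀ z_d T M τ = ⨅ y : reachableSet U B y₀ T τ M, ‖z_d - y‖ := by
  rw [rOP, reachableSet, ← sInf_image' (f := fun y => ‖z_d - y‖), image_image]
  simp_rw [norm_sub_rev]

theorem IsOptOP.re_inner_le_zero (hU : IsUnitaryGroup U) (hτ : 0 ≤ τ)
    (hu : IsOptOP U B y₀ z_d T M τ u) (hv : v ∈ UadmSet M τ T) :
    RCLike.re ⟪z_d - stateT U B T τ u y₀, stateT U B T τ v y₀ - stateT U B T τ u y₀⟫_ℂ ≤ 0 := by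
  let _ := InnerProductSpace.complexToReal (G := E)
  rw [← real_inner_eq_re_inner]
  refine (norm_eq_iInf_iff_real_inner_le_zero (hU.convex_reachableSet hτ)
    ⟨u, hu.1, rfl⟩).1 ?_ _ ⟨v, hv, rfl⟩
  rw [← rOP_eq_iInf_reachableSet, norm_sub_rev, hu.2]

theorem IsOptOP.setIntegral_re_inner_adjState_le [CompleteSpace E] (hU : IsUnitaryGroup U)
    (hB : (B : E →ₗ[ℂ] E).IsSymmetric) (hτ : 0 ≤ τ) (hu : IsOptOP U B y₀ z_d T M τ u)
    (hv : v ∈ UadmSet M τ T) :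
    ∫ s in Ioo τ T, RCLike.re ⟪B (adjState U B y₀ z_d T τ u s), v s⟫_ℂ ≤
      ∫ s in Ioo τ T, RCLike.re ⟪B (adjState U B y₀ z_d T τ u s), u s⟫_ℂ := by
  have h := hu.re_inner_le_zero hU hτ hv
  rw [stateT_eq_add_controlMap (u := v), stateT_eq_add_controlMap (u := u),
    add_sub_add_left_eq_sub, inner_sub_right, map_sub, ← stateT_eq_add_controlMap,
    hU.re_inner_controlMap hB _ (hu.1.1.mono hτ le_rfl),
    hU.re_inner_controlMap hB _ (hv.1.mono hτ le_rfl)] at h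
  exact sub_nonpos.1 h

theorem IsOptOP.ae_norm_eq [CompleteSpace E] (hU : IsUnitaryGroup U)
    (hB : (B : E →ₗ[ℂ] E).IsSymmetric) (hUC : UC U B) (hτ : 0 ≤ τ) (hM : 0 ≤ M)
    (hu : IsOptOP U B y₀ z_d T M τ u) (hne : stateT U B T τ u y₀ ≠ z_d) :
    ∀ᵐ t : ℝ, t ∈ Ioo τ T → ‖u t‖ = M := by
  set φ : ℝ → E := fun s => B (adjState U B y₀ z_d T τ u s)
  have hφ : Continuous φ := B.continuous.comp <| (hU.continuous_apply _).comp (continuous_sub_right T)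
  have hv : (fun s => (M / ‖φ s‖) • φ s) ∈ UadmSet M τ T :=
    ⟨⟨(measurable_const.div hφ.norm.measurable).aestronglyMeasurable.smul
      hφ.aestronglyMeasurable, M, ae_of_all _ fun s _ => norm_div_norm_smul_le hM _⟩,
      ae_of_all _ fun s _ => norm_div_norm_smul_le hM _⟩
  have hle : ∀ᵐ s ∂volume.restrict (Ioo τ T),
      RCLike.re ⟪φ s, u s⟫_ℂ ≤ RCLike.re ⟪φ s, (M / ‖φ s‖) • φ s⟫_ℂ := by
    filter_upwards [(ae_restrict_iff' measurableSet_Ioo).2 hu.1.2] with s hs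
    rw [re_inner_div_norm_smul, mul_comm]
    exact (re_inner_le_norm _ _).trans (mul_le_mul_of_nonneg_left hs (norm_nonneg _))
  have hIu := hU.integrableOn_re_inner_adjoint hB (z_d - stateT U B T τ u y₀)
    (hu.1.1.mono hτ le_rfl)
  have hIv := hU.integrableOn_re_inner_adjoint hB (z_d - stateT U B T τ u y₀)
    (hv.1.mono hτ le_rfl)
  have heq : (fun s => RCLike.re ⟪φ s, u s⟫_ℂ) =ᵐ[volume.restrict (Ioo τ T)]
      fun s => RCLike.re ⟪φ s, (M / ‖φ s‖) • φ s⟫_ℂ :=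
    (integral_eq_iff_of_ae_le hIu hIv hle).1 <| le_antisymm (integral_mono_ae hIu hIv hle)
      (hu.setIntegral_re_inner_adjState_le hU hB hτ hv)
  have hφne : ∀ᵐ s ∂volume.restrict (Ioo τ T), φ s ≠ 0 :=
    ae_restrict_of_ae (hUC.ae_ne_zero (sub_ne_zero.2 hne.symm) T)
  rw [← ae_restrict_iff' measurableSet_Ioo]
  filter_upwards [heq, (ae_restrict_iff' measurableSet_Ioo).2 hu.1.2, hφne] with s hs hsM hφs
  rw [re_inner_div_norm_smul] at hs
  refine le_antisymm hsM (le_of_mul_le_mul_right ?_ (norm_pos_iff.2 hφs))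
  rw [← hs, mul_comm]
  exact re_inner_le_norm _ _

theorem MNP_le (hu : u ∈ WadmSet U B y₀ z_d T τ r) : MNP U B y₀ z_d T τ r ≤ supNorm u τ T :=
  csInf_le ⟨0, by rintro _ ⟨v, -, rfl⟩; exact supNorm_nonneg v τ T⟩ ⟨u, hu, rfl⟩

variable (U B y₀ z_d T τ r) in
theorem MNP_nonneg : 0 ≤ MNP U B y₀ z_d T τ r :=
  Real.sInf_nonneg <| by rintro _ ⟨v, -, rfl⟩; exact supNorm_nonneg v τ T

theorem Mtau_le (hu : MemLinfty u 0 T) (hz : stateT U B T τ u y₀ = z_d) :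
    Mtau U B y₀ z_d T τ ≤ supNorm u τ T :=
  csInf_le ⟨0, by rintro _ ⟨v, -, rfl⟩; exact supNorm_nonneg v τ T⟩ ⟨u, ⟨hu, hz⟩, rfl⟩

theorem MNP_lt_of_norm_lt (hM : 0 < M) (hv : v ∈ UadmSet M τ T)
    (hr : ‖stateT U B T τ v y₀ - z_d‖ < r) : MNP U B y₀ z_d T τ r < M := by
  have hcont : Continuous fun c : ℝ => ‖U T y₀ + c • controlMap U B T τ v - z_d‖ := by
    fun_prop
  rw [stateT_eq_add_controlMap] at hr
  have hnear : ∀ᶠ c in 𝓝[<] (1 : ℝ), ‖U T y₀ + c • controlMap U B T τ v - z_d‖ < r ∧ c ∈ Ioo 0 1 :=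
    ((hcont.tendsto 1).eventually (gt_mem_nhds (by simpa using hr))).filter_mono
      nhdsWithin_le_nhds |>.and (Ioo_mem_nhdsLT one_pos)
  obtain ⟨c, hc, hc0, hc1⟩ := hnear.exists
  have hcv : c • v ∈ WadmSet U B y₀ z_d T τ r := by
    refine ⟨hv.1.const_smul c, ?_⟩
    rw [stateT_eq_add_controlMap, controlMap_smul]
    exact hc.le
  have hbound : ∀ᵐ t : ℝ, t ∈ Ioo τ T → ‖(c • v) t‖ ≤ c * M := by
    filter_upwards [hv.2] with t ht ht'
    rw [Pi.smul_apply, norm_smul, Real.norm_of_nonneg hc0.le]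
    exact mul_le_mul_of_nonneg_left (ht ht') hc0.le
  calc MNP U B y₀ z_d T τ r ≤ supNorm (c • v) τ T := MNP_le hcv
    _ ≤ c * M := supNorm_le (by positivity) hbound
    _ < M := mul_lt_of_lt_one_left hM hc1

theorem IsOptNP.mem_UadmSet (hτ : 0 ≤ τ) (hu : IsOptNP U B y₀ z_d T τ r u) :
    u ∈ UadmSet (MNP U B y₀ z_d T τ r) τ T :=
  ⟨hu.1.1, (ae_norm_le_supNorm (hu.1.1.mono hτ le_rfl).2).mono fun _ ht ht' =>
    (ht ht').trans_eq hu.2⟩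

theorem IsOptNP.isOptOP (hτ : 0 ≤ τ) (hu : IsOptNP U B y₀ z_d T τ r u) :
    IsOptOP U B y₀ z_d T (MNP U B y₀ z_d T τ r) τ u := by
  have huU := hu.mem_UadmSet hτ
  refine ⟨huU, le_antisymm ?_ (rOP_le huU)⟩
  refine le_csInf ⟨_, u, huU, rfl⟩ ?_
  rintro _ ⟨v, hvU, rfl⟩
  by_contra! hlt
  rcases (MNP_nonneg U B y₀ z_d T τ r).eq_or_lt with hM | hM
  · have hzero {w : ℝ → E} (hw : w ∈ UadmSet (MNP U B y₀ z_d T τ r) τ T) :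
        ∀ᵐ t : ℝ, t ∈ Ioo τ T → w t = 0 :=
      hw.2.mono fun _ ht ht' => norm_le_zero_iff.1 (hM ▸ ht ht')
    have hsame : stateT U B T τ v y₀ = stateT U B T τ u y₀ := stateT_eq_of_ae_eq <| by
      filter_upwards [hzero hvU, hzero huU] with t hvt hut ht
      rw [hvt ht, hut ht]
    exact hlt.ne (by rw [hsame])
  · exact (MNP_lt_of_norm_lt hM hvU (hlt.trans_le hu.1.2)).false

theorem IsOptNP.stateT_ne (hτ : 0 ≤ τ) (hr : 0 < r) (hM : 0 < MNP U B y₀ z_d T τ r)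
    (hu : IsOptNP U B y₀ z_d T τ r u) : stateT U B T τ u y₀ ≠ z_d := fun hz =>
  (MNP_lt_of_norm_lt hM (hu.mem_UadmSet hτ) (by rwa [hz, sub_self, norm_zero])).false

theorem IsOptNP.ae_norm_eq [CompleteSpace E] (hU : IsUnitaryGroup U)
    (hB : (B : E →ₗ[ℂ] E).IsSymmetric) (hUC : UC U B) (hτ : 0 ≤ τ) (hr : 0 < r)
    (hu : IsOptNP U B y₀ z_d T τ r u) :
    ∀ᵐ t : ℝ, t ∈ Ioo τ T → ‖u t‖ = MNP U B y₀ z_d T τ r := by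
  rcases (MNP_nonneg U B y₀ z_d T τ r).eq_or_lt with hM | hM
  · exact (hu.mem_UadmSet hτ).2.mono fun _ ht ht' =>
      le_antisymm (ht ht') (hM ▸ norm_nonneg _)
  · exact (hu.isOptOP hτ).ae_norm_eq hU hB hUC hτ hM.le (hu.stateT_ne hτ hr hM)

theorem IsOptNP.ae_eq [CompleteSpace E] (hU : IsUnitaryGroup U)
    (hB : (B : E →ₗ[ℂ] E).IsSymmetric) (hUC : UC U B) (hτ : 0 ≤ τ) (hr : 0 < r)
    (hu : IsOptNP U B y₀ z_d T τ r u) (hv : IsOptNP U B y₀ z_d T τ r v) :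
    ∀ᵐ t : ℝ, t ∈ Ioo τ T → u t = v t := by
  have hhalf : (1 / 2 : ℝ) + 1 / 2 = 1 := by norm_num
  have hmW := hU.convex_WadmSet hτ hu.1 hv.1 (by norm_num) (by norm_num) hhalf
  have hmU := convex_UadmSet (hu.mem_UadmSet hτ) (hv.mem_UadmSet hτ) (by norm_num) (by norm_num)
    hhalf
  have hm : IsOptNP U B y₀ z_d T τ r ((1 / 2 : ℝ) • u + (1 / 2 : ℝ) • v) :=
    ⟨hmW, le_antisymm (supNorm_le (MNP_nonneg ..) hmU.2) (MNP_le hmW)⟩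
  let _ := InnerProductSpace.complexToReal (G := E)
  filter_upwards [hu.ae_norm_eq hU hB hUC hτ hr, hv.ae_norm_eq hU hB hUC hτ hr,
    hm.ae_norm_eq hU hB hUC hτ hr] with t hut hvt hmt ht
  by_contra hne
  have hmt' := hmt ht
  simp only [Pi.add_apply, Pi.smul_apply, ← smul_add] at hmt'
  exact ((norm_midpoint_lt_iff ((hut ht).trans (hvt ht).symm)).2 hne).ne
    (hmt'.trans (hut ht).symm)

theorem IsOptOP.supNorm_eq [CompleteSpace E] (hU : IsUnitaryGroup U) (hB : (B : E →ₗ[ℂ] E).IsSymmetric)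
    (hUC : UC U B) (hτ : τ ∈ Ico 0 T) (hM : 0 ≤ M) (hMlt : M < Mtau U B y₀ z_d T τ)
    (hu : IsOptOP U B y₀ z_d T M τ u) : supNorm u τ T = M :=
  supNorm_eq_of_ae_norm_eq hτ.2 <| hu.ae_norm_eq hU hB hUC hτ.1 hM fun hz =>
    ((Mtau_le hu.1.1 hz).trans (supNorm_le hM hu.1.2)).not_gt hMlt

theorem IsOptOP.isOptNP [CompleteSpace E] (hU : IsUnitaryGroup U) (hB : (B : E →ₗ[ℂ] E).IsSymmetric)
    (hUC : UC U B) (hτ : τ ∈ Ico 0 T) (hM : 0 ≤ M) (hMlt : M < Mtau U B y₀ z_d T τ)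
    (hu : IsOptOP U B y₀ z_d T M τ u) :
    IsOptNP U B y₀ z_d T τ (rOP U B y₀ z_d T M τ) u := by
  have huW : u ∈ WadmSet U B y₀ z_d T τ (rOP U B y₀ z_d T M τ) := ⟨hu.1.1, hu.2.le⟩
  have hsup := hu.supNorm_eq hU hB hUC hτ hM hMlt
  refine ⟨huW, hsup.trans (le_antisymm ?_ ((MNP_le huW).trans_eq hsup))⟩
  refine le_csInf ⟨_, u, huW, rfl⟩ ?_
  rintro _ ⟨v, hvW, rfl⟩
  by_contra! hlt
  have hvU : v ∈ UadmSet M τ T := ⟨hvW.1, (ae_norm_le_supNorm (hvW.1.mono hτ.1 le_rfl).2).mono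
    fun _ ht ht' => (ht ht').trans hlt.le⟩
  have hv : IsOptOP U B y₀ z_d T M τ v := ⟨hvU, le_antisymm hvW.2 (rOP_le hvU)⟩
  exact hlt.ne (hv.supNorm_eq hU hB hUC hτ hM hMlt)

end Control

theorem op_np_equivalence_general
    (U : ℝ → H →L[ℂ] H) (B : H →L[ℂ] H) (hU : IsUnitaryGroup U) (hB : IsOrthProj B)
    (hUC : UC U B)
    (T : ℝ) (y₀ z_d : H) :
    (∀ τ ∈ Ico (0 : ℝ) T, ∀ M : ℝ, 0 ≤ M → M < Mtau U B y₀ z_d T τ →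
      ∀ u : ℝ → H, IsOptOP U B y₀ z_d T M τ u → IsOptNP U B y₀ z_d T τ (rOP U B y₀ z_d T M τ) u) ∧
    (∀ τ ∈ Ico (0 : ℝ) T, ∀ r ∈ Ioc (0 : ℝ) ‖U T y₀ - z_d‖,
      ∀ u : ℝ → H, IsOptNP U B y₀ z_d T τ r u → IsOptOP U B y₀ z_d T (MNP U B y₀ z_d T τ r) τ u) ∧
    (∀ τ ∈ Ico (0 : ℝ) T, ∀ r ∈ Ioc (0 : ℝ) ‖U T y₀ - z_d‖,
      (∀ u : ℝ → H, IsOptNP U B y₀ z_d T τ r u →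
        ∀ᵐ t : ℝ ∂volume, t ∈ Ioo τ T → ‖u t‖ = MNP U B y₀ z_d T τ r) ∧
      (∀ u₁ u₂ : ℝ → H, IsOptNP U B y₀ z_d T τ r u₁ → IsOptNP U B y₀ z_d T τ r u₂ →
        ∀ᵐ t : ℝ ∂volume, t ∈ Ioo τ T → u₁ t = u₂ t)) :=
  ⟨fun _ hτ _ hM hMlt _ hu => hu.isOptNP hU hB.isSymmetric hUC hτ hM hMlt,
    fun _ hτ _ _ _ hu => hu.isOptOP hτ.1,
    fun _ hτ _ hr => ⟨fun _ hu => hu.ae_norm_eq hU hB.isSymmetric hUC hτ.1 hr.1,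
      fun _ _ hu₁ hu₂ => hu₁.ae_eq hU hB.isSymmetric hUC hτ.1 hr.1 hu₂⟩⟩

theorem op_np_equivalence
    (U : ℝ → H →L[ℂ] H) (B : H →L[ℂ] H) (hU : IsUnitaryGroup U) (hB : IsOrthProj B)
    (hEC : EC U B) (hECrev : EC (fun t => U (-t)) B)
    (hUC : UC U B)
    (T : ℝ) (hT : 0 < T) (y₀ z_d : H) (hrT : 0 < ‖U T y₀ - z_d‖) :
    (∀ τ ∈ Ico (0 : ℝ) T, ∀ M : ℝ, 0 ≤ M → M < Mtau U B y₀ z_d T τ →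
      ∀ u : ℝ → H, IsOptOP U B y₀ z_d T M τ u → IsOptNP U B y₀ z_d T τ (rOP U B y₀ z_d T M τ) u) ∧
    (∀ τ ∈ Ico (0 : ℝ) T, ∀ r ∈ Ioc (0 : ℝ) ‖U T y₀ - z_d‖,
      ∀ u : ℝ → H, IsOptNP U B y₀ z_d T τ r u → IsOptOP U B y₀ z_d T (MNP U B y₀ z_d T τ r) τ u) ∧
    (∀ τ ∈ Ico (0 : ℝ) T, ∀ r ∈ Ioc (0 : ℝ) ‖U T y₀ - z_d‖,
      (∀ u : ℝ → H, IsOptNP U B y₀ z_d T τ r u →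
        ∀ᵐ t : ℝ ∂volume, t ∈ Ioo τ T → ‖u t‖ = MNP U B y₀ z_d T τ r) ∧
      (∀ u₁ u₂ : ℝ → H, IsOptNP U B y₀ z_d T τ r u₁ → IsOptNP U B y₀ z_d T τ r u₂ →
        ∀ᵐ t : ℝ ∂volume, t ∈ Ioo τ T → u₁ t = u₂ t)) :=
  op_np_equivalence_general U B hU hB hUC T y₀ z_d
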